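/- Jacobi equation for the connection random walk: over the rationals the connection Laplacian L is invertible, and for every integer n (integer powers taken using the inverse) one has L^{n+2} − 2·L^{n} + L^{n−2} = |H|² · L^{n}; in particular, for every rational vector ψ on S the two-sided random walk ψ(n) = Lⁿψ solves ψ(n+2) − 2ψ(n) + ψ(n−2) = |H|²ψ(n). -/

import Mathlib

open Matrix

variable {V : Type*} [Fintype V] [DecidableEq V]

/-- The simplices of the 1-dimensional simplicial complex of a graph: vertices and edges. -/
abbrev Simplex (G : SimpleGraph V) [DecidableRel G.Adj] := V ⊕ G.edgeSet

variable (G : SimpleGraph V) [DecidableRel G.Adj]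

/-- The vertex set of a simplex. -/
def sVerts : Simplex G → Set V
  | Sum.inl u => {u}
  | Sum.inr f => {w | w ∈ (f : Sym2 V)}

instance (x : Simplex G) (w : V) : Decidable (w ∈ sVerts G x) :=
  match x with
  | Sum.inl u => decidable_of_iff (w = u) (by simp [sVerts])
  | Sum.inr f => decidable_of_iff (w ∈ (f : Sym2 V)) (by simp [sVerts])

/-- Two simplices touch if their vertex sets intersect. -/
def touches (x y : Simplex G) : Prop := ∃ w, w ∈ sVerts G x ∧ w ∈ sVerts G y

instance : DecidableRel (touches G) := fun _ _ => Fintype.decidableExistsFintype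

/-- The connection Laplacian. -/
def connL : Matrix (Simplex G) (Simplex G) ℤ :=
  Matrix.of fun x y => if touches G x y then 1 else 0

/-- The sign-less incidence matrix. -/
def absd : Matrix (Simplex G) (Simplex G) ℤ :=
  Matrix.of fun a b =>
    match a, b with
    | Sum.inr f, Sum.inl u => if u ∈ (f : Sym2 V) then 1 else 0
    | _, _ => 0

/-- The sign-less Hodge Laplacian. -/
def absH : Matrix (Simplex G) (Simplex G) ℤ := (absd G + (absd G)ᵀ) ^ 2

/-- The connection Laplacian as a rational matrix. -/
def connLQ : Matrix (Simplex G) (Simplex G) ℚ := (connL G).map (Int.cast : ℤ → ℚ)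

/-- The sign-less Hodge Laplacian as a rational matrix. -/
def absHQ : Matrix (Simplex G) (Simplex G) ℚ := (absH G).map (Int.cast : ℤ → ℚ)

/-!
Listing vertices before edges, `L = [[1, B], [Bᵀ, BᵀB - 1]]` where `B` is the vertex–edge
incidence matrix: two distinct edges share at most one vertex and an edge shares two with itself.
Since `|d| + |d|ᵀ = [[0, B], [Bᵀ, 0]]`, a block computation gives `L (L - |H|) = (L - |H|) L = 1`.
Hence `|H| = L - L⁻¹`, so `|H|² Lⁿ = (L² - 2 + L⁻²) Lⁿ`.
-/

open Finset

section BlockInverse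

variable {m n R : Type*} [Fintype m] [Fintype n] [DecidableEq m] [DecidableEq n] [Ring R]

theorem Matrix.fromBlocks_sub_sq_fromBlocks (B : Matrix m n R) (C : Matrix n m R) :
    fromBlocks 1 B C (C * B - 1) - fromBlocks 0 B C 0 ^ 2 = fromBlocks (1 - B * C) B C (-1) := by
  rw [sq, fromBlocks_multiply, sub_eq_add_neg, fromBlocks_neg, fromBlocks_add]
  congr 1 <;> simp [sub_eq_add_neg]

theorem Matrix.fromBlocks_mul_fromBlocks_eq_one (B : Matrix m n R) (C : Matrix n m R) :
    fromBlocks 1 B C (C * B - 1) * fromBlocks (1 - B * C) B C (-1) = 1 := by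
  rw [fromBlocks_multiply, ← fromBlocks_one]
  congr 1 <;> simp only [Matrix.mul_sub, Matrix.sub_mul, Matrix.mul_assoc, Matrix.one_mul,
    Matrix.mul_one, Matrix.mul_neg] <;> abel

theorem Matrix.fromBlocks_mul_fromBlocks_eq_one' (B : Matrix m n R) (C : Matrix n m R) :
    fromBlocks (1 - B * C) B C (-1) * fromBlocks 1 B C (C * B - 1) = 1 := by
  rw [fromBlocks_multiply, ← fromBlocks_one]
  congr 1 <;> simp only [Matrix.mul_sub, Matrix.sub_mul, Matrix.mul_assoc, Matrix.one_mul,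
    Matrix.mul_one, Matrix.neg_mul] <;> abel

end BlockInverse

theorem Units.coe_sub_inv_sq_mul_zpow {R : Type*} [Ring R] (u : Rˣ) (n : ℤ) :
    ((u : R) - ↑u⁻¹) ^ 2 * ↑(u ^ n) = ↑(u ^ (n + 2)) - 2 • ↑(u ^ n) + ↑(u ^ (n - 2)) := by
  have hplus : u ^ (n + 2) = u * u * u ^ n := by group
  have hminus : u ^ (n - 2) = u⁻¹ * u⁻¹ * u ^ n := by group
  rw [hplus, hminus]
  simp only [Units.val_mul, sq, sub_mul, mul_sub, two_smul, Units.mul_inv, Units.inv_mul]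
  noncomm_ring

def incidence (E : Set (Sym2 V)) : Matrix V E ℤ :=
  Matrix.of fun v e => if v ∈ (e : Sym2 V) then 1 else 0

theorem absH_eq_fromBlocks_sq :
    absH G = fromBlocks 0 (incidence G.edgeSet) (incidence G.edgeSet)ᵀ 0 ^ 2 := by
  rw [absH]
  congr 1
  ext (x | x) (y | y) <;> simp [absd, incidence]

theorem Sym2.card_filter_mem_and_mem {z z' : Sym2 V} (hz : ¬z.IsDiag) :
    #{v | v ∈ z ∧ v ∈ z'} = (if ∃ w, w ∈ z ∧ w ∈ z' then 1 else 0) + if z = z' then 1 else 0 := by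
  by_cases hzz' : z = z'
  · subst hzz'
    have hfilter : ({v | v ∈ z ∧ v ∈ z} : Finset V) = z.toFinset := by ext; simp
    rw [hfilter, Sym2.card_toFinset_of_not_isDiag _ hz]
    simpa using ⟨_, Sym2.out_fst_mem z⟩
  · have hle : #{v | v ∈ z ∧ v ∈ z'} ≤ 1 :=
      Finset.card_le_one.mpr fun a ha b hb => by
        by_contra hab
        simp only [Finset.mem_filter, Finset.mem_univ, true_and] at ha hb
        exact hzz' (Sym2.eq_of_ne_mem hab ha.1 hb.1 ha.2 hb.2)
    have hpos : 0 < #{v | v ∈ z ∧ v ∈ z'} ↔ ∃ w, w ∈ z ∧ w ∈ z' := by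
      simp [Finset.card_pos, Finset.Nonempty]
    rw [if_neg hzz', add_zero]
    split_ifs with h
    · exact le_antisymm hle (hpos.mpr h)
    · exact Nat.eq_zero_of_not_pos (mt hpos.mp h)

theorem transpose_incidence_mul_apply {E : Set (Sym2 V)} (hE : ∀ z ∈ E, ¬z.IsDiag) (e f : E) :
    ((incidence E)ᵀ * incidence E) e f =
      (if ∃ w, w ∈ (e : Sym2 V) ∧ w ∈ (f : Sym2 V) then 1 else 0) + if e = f then 1 else 0 := by
  have hsum : ((incidence E)ᵀ * incidence E) e f =
      ∑ v, if v ∈ (e : Sym2 V) ∧ v ∈ (f : Sym2 V) then (1 : ℤ) else 0 := by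
    simp only [Matrix.mul_apply, Matrix.transpose_apply, incidence, Matrix.of_apply, ite_and,
      ite_mul, one_mul, zero_mul]
  rw [hsum, Finset.sum_boole, Sym2.card_filter_mem_and_mem (hE e e.2)]
  simp [Subtype.ext_iff]

theorem connL_eq_fromBlocks :
    connL G = fromBlocks 1 (incidence G.edgeSet) (incidence G.edgeSet)ᵀ
      ((incidence G.edgeSet)ᵀ * incidence G.edgeSet - 1) := by
  ext (u | e) (w | f)
  · simp [connL, touches, sVerts, Matrix.one_apply, eq_comm]
  · simp [connL, touches, sVerts, incidence]
  · simp [connL, touches, sVerts, incidence]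
  · simp [connL, touches, sVerts, Matrix.one_apply,
      transpose_incidence_mul_apply fun _ => G.not_isDiag_of_mem_edgeSet]

theorem connL_mul_sub_absH : connL G * (connL G - absH G) = 1 := by
  rw [absH_eq_fromBlocks_sq, connL_eq_fromBlocks, Matrix.fromBlocks_sub_sq_fromBlocks,
    Matrix.fromBlocks_mul_fromBlocks_eq_one]

theorem sub_absH_mul_connL : (connL G - absH G) * connL G = 1 := by
  rw [absH_eq_fromBlocks_sq, connL_eq_fromBlocks, Matrix.fromBlocks_sub_sq_fromBlocks,
    Matrix.fromBlocks_mul_fromBlocks_eq_one']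

def connLUnit : (Matrix (Simplex G) (Simplex G) ℤ)ˣ :=
  ⟨connL G, connL G - absH G, connL_mul_sub_absH G, sub_absH_mul_connL G⟩

def connLQUnit : (Matrix (Simplex G) (Simplex G) ℚ)ˣ :=
  Units.map (Int.castRingHom ℚ).mapMatrix.toMonoidHom (connLUnit G)

theorem absHQ_eq_connLQUnit_sub_inv :
    absHQ G = connLQUnit G - ↑(connLQUnit G)⁻¹ := by
  change _ = (Int.castRingHom ℚ).mapMatrix (connL G) -
    (Int.castRingHom ℚ).mapMatrix (connL G - absH G)
  rw [map_sub, sub_sub_cancel]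
  rfl

/-- Jacobi equation for the connection random walk: `L` is invertible over `ℚ`, and for
every integer `n` one has `L^(n+2) - 2 L^n + L^(n-2) = |H|² L^n`; in particular the
two-sided random walk `ψ(n) = Lⁿ ψ` solves `ψ(n+2) - 2 ψ(n) + ψ(n-2) = |H|² ψ(n)`. -/
theorem jacobi_equation :
    IsUnit (connLQ G) ∧
    ∀ n : ℤ,
      (connLQ G ^ (n + 2) - 2 • connLQ G ^ n + connLQ G ^ (n - 2)
        = absHQ G ^ 2 * connLQ G ^ n) ∧
      ∀ ψ : Simplex G → ℚ,
        (connLQ G ^ (n + 2)).mulVec ψ - 2 • (connLQ G ^ n).mulVec ψ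
            + (connLQ G ^ (n - 2)).mulVec ψ
          = (absHQ G ^ 2).mulVec ((connLQ G ^ n).mulVec ψ) := by
  have hpow (k : ℤ) : connLQ G ^ k = ↑(connLQUnit G ^ k) :=
    (Matrix.coe_units_zpow (connLQUnit G) k).symm
  have hjacobi (n : ℤ) :
      connLQ G ^ (n + 2) - 2 • connLQ G ^ n + connLQ G ^ (n - 2) = absHQ G ^ 2 * connLQ G ^ n := by
    rw [hpow, hpow, hpow, absHQ_eq_connLQUnit_sub_inv, Units.coe_sub_inv_sq_mul_zpow]
  refine ⟨(connLQUnit G).isUnit, fun n => ⟨hjacobi n, fun ψ => ?_⟩⟩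
  simpa only [Matrix.sub_mulVec, Matrix.add_mulVec, Matrix.smul_mulVec, Matrix.mulVec_mulVec]
    using congrArg (· *ᵥ ψ) (hjacobi n)
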